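/- arXiv:1001.3729 — 9 statements merged into one kernel-verified Lean document; each statement's English description precedes it below -/
import Mathlib

section
/- Let K be a convex body in ℝ^d, Λ a lattice in ℝ^d, and Λ̃ a full-rank sublattice of Λ. Then the number of lattice points of Λ in K satisfies G(K,Λ) ≤ (det(Λ̃)/det(Λ)) · G(K−K, Λ̃), where G(A,L) = #(A ∩ L). -/
/-!
The ratio of covolumes is the index `[Λ : Λ']`. The points of `K ∩ Λ` fall into at most
`[Λ : Λ']` cosets of `Λ'`, and the points in one coset, translated by one of them, are distinct
points of `(K - K) ∩ Λ'`.
-/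

open Pointwise Set

noncomputable def succMin {d : ℕ} (i : ℕ) (C : Set (Fin d → ℝ)) (Λ : Submodule ℤ (Fin d → ℝ)) : ℝ :=
  sInf {t : ℝ | 0 < t ∧ i ≤ Module.finrank ℝ (Submodule.span ℝ ((t • C) ∩ (Λ : Set (Fin d → ℝ))))}

noncomputable def lam {d : ℕ} (i : ℕ) (K : Set (Fin d → ℝ)) (Λ : Submodule ℤ (Fin d → ℝ)) : ℝ :=
  succMin i ((2:ℝ)⁻¹ • (K - K)) Λ

noncomputable def latCount {d : ℕ} (K : Set (Fin d → ℝ)) (Λ : Submodule ℤ (Fin d → ℝ)) : ℕ :=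
  (K ∩ (Λ : Set (Fin d → ℝ))).ncard

namespace AddSubgroup

variable {G : Type*} [AddCommGroup G] (H : AddSubgroup G)

theorem ncard_le_ncard_sub_inter_of_sub_mem {A S : Set G} (hS : S.Finite) (hAS : A ⊆ S)
    (hA : ∀ a ∈ A, ∀ b ∈ A, a - b ∈ H) : A.ncard ≤ ((S - S) ∩ H).ncard := by
  rcases A.eq_empty_or_nonempty with rfl | ⟨a₀, ha₀⟩
  · simp
  refine Set.ncard_le_ncard_of_injOn (· - a₀) (fun a ha ↦ ?_) sub_left_injective.injOn
    ((hS.sub hS).inter_of_left _)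
  exact ⟨Set.sub_mem_sub (hAS ha) (hAS ha₀), hA a ha a₀ ha₀⟩

theorem ncard_le_index_mul_ncard_sub_inter [H.FiniteIndex] (S : Set G) :
    S.ncard ≤ H.index * ((S - S) ∩ H).ncard := by
  classical
  rcases S.finite_or_infinite with hS | hS
  swap
  · simp [hS.ncard]
  let := H.fintypeQuotientOfFiniteIndex
  have hfiber : ∀ q ∈ hS.toFinset.image ((↑) : G → G ⧸ H),
      {a ∈ hS.toFinset | (QuotientAddGroup.mk a : G ⧸ H) = q}.card ≤ ((S - S) ∩ H).ncard := by
    intro q _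
    rw [← Set.ncard_coe_finset]
    refine H.ncard_le_ncard_sub_inter_of_sub_mem hS (fun a ha ↦ ?_) fun a ha b hb ↦ ?_
    · simp_all
    · simp only [Finset.coe_filter, Set.mem_ofPred_eq] at ha hb
      exact QuotientAddGroup.eq_iff_sub_mem.mp (ha.2.trans hb.2.symm)
  calc S.ncard = hS.toFinset.card := Set.ncard_eq_toFinset_card S hS
    _ ≤ ((S - S) ∩ H).ncard * (hS.toFinset.image ((↑) : G → G ⧸ H)).card :=
      Finset.card_le_mul_card_image _ _ hfiber
    _ ≤ ((S - S) ∩ H).ncard * H.index := by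
      rw [index_eq_card, Nat.card_eq_fintype_card]
      gcongr
      exact Finset.card_le_univ _
    _ = H.index * ((S - S) ∩ H).ncard := mul_comm _ _

theorem ncard_inter_le_relIndex_mul (L : AddSubgroup G) [H.IsFiniteRelIndex L] {K : Set G}
    (hK : ((K - K) ∩ H).Finite) : (K ∩ L).ncard ≤ H.relIndex L * ((K - K) ∩ H).ncard := by
  have hcount : (K ∩ L).ncard = ((↑) ⁻¹' K : Set L).ncard := by
    rw [← Set.ncard_image_of_injective _ Subtype.val_injective,
      Set.image_preimage_eq_inter_range, Subtype.range_coe]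
  set S : Set L := (↑) ⁻¹' K
  have hdiff : ((S - S) ∩ H.addSubgroupOf L).ncard ≤ ((K - K) ∩ H).ncard := by
    refine Set.ncard_le_ncard_of_injOn (↑) ?_ Subtype.val_injective.injOn hK
    rintro _ ⟨⟨a, ha, b, hb, rfl⟩, hab⟩
    exact ⟨Set.sub_mem_sub ha hb, hab⟩
  calc (K ∩ L).ncard = S.ncard := hcount
    _ ≤ (H.addSubgroupOf L).index * ((S - S) ∩ H.addSubgroupOf L).ncard :=
      ncard_le_index_mul_ncard_sub_inter _ S
    _ ≤ H.relIndex L * ((K - K) ∩ H).ncard := by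
      rw [relIndex]
      gcongr

end AddSubgroup

theorem Submodule.finite_inter_of_isBounded {E : Type*} [NormedAddCommGroup E] [ProperSpace E]
    (L : Submodule ℤ E) [DiscreteTopology L] {B : Set E} (hB : Bornology.IsBounded B) :
    (B ∩ L).Finite := by
  have : DiscreteTopology L.toAddSubgroup := inferInstanceAs (DiscreteTopology L)
  exact Metric.finite_isBounded_inter_isClosed DiscreteTopology.isDiscrete hB
    (AddSubgroup.isClosed_of_discrete (H := L.toAddSubgroup))

theorem stmt1_general {d : ℕ} (K : Set (Fin d → ℝ)) (Λ Λ' : Submodule ℤ (Fin d → ℝ))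
    [DiscreteTopology Λ] [IsZLattice ℝ Λ] [DiscreteTopology Λ'] [IsZLattice ℝ Λ']
    (hKcomp : IsCompact K)
    (hsub : Λ' ≤ Λ) :
    (latCount K Λ : ℝ) ≤ (ZLattice.covolume Λ' / ZLattice.covolume Λ) *
      (latCount (K - K) Λ' : ℝ) := by
  have hindex := ZLattice.covolume_div_covolume_eq_relIndex Λ' Λ hsub
  have : Λ'.toAddSubgroup.IsFiniteRelIndex Λ.toAddSubgroup := by
    refine ⟨(Nat.cast_ne_zero (R := ℝ)).mp ?_⟩
    rw [← hindex]
    exact (div_pos (ZLattice.covolume_pos Λ') (ZLattice.covolume_pos Λ)).ne'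
  rw [hindex]
  exact_mod_cast Λ'.toAddSubgroup.ncard_inter_le_relIndex_mul Λ.toAddSubgroup
    (Λ'.finite_inter_of_isBounded (hKcomp.isBounded.sub hKcomp.isBounded))

theorem stmt1 {d : ℕ} (K : Set (Fin d → ℝ)) (Λ Λ' : Submodule ℤ (Fin d → ℝ))
    [DiscreteTopology Λ] [IsZLattice ℝ Λ] [DiscreteTopology Λ'] [IsZLattice ℝ Λ']
    (hKconv : Convex ℝ K) (hKcomp : IsCompact K) (hKint : (interior K).Nonempty)
    (hsub : Λ' ≤ Λ) :
    (latCount K Λ : ℝ) ≤ (ZLattice.covolume Λ' / ZLattice.covolume Λ) *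
      (latCount (K - K) Λ' : ℝ) :=
  stmt1_general K Λ Λ' hKcomp hsub
end

section
/- Let K ⊂ ℝ^d be a convex body and Λ a lattice in ℝ^d such that K ∩ Λ = ∅. Then for every real t > 1 there exists a lattice vector v ∈ Λ such that K ∩ (v + tΛ) = ∅. -/
/-
Let `p ∈ K` be a point of `K` nearest to `Λ`, at distance `δ > 0`, and pick `q ∈ Λ` with
`‖p - q‖ < δ / (1 - t⁻¹)`. The homothety with centre `p` and ratio `t⁻¹` maps `K` into `K`
(convexity) and `q + tΛ` onto `Λ + (1 - t⁻¹) (p - q)`, a translate of `Λ` by a vector shorter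
than `δ`. So a point of `K ∩ (q + tΛ)` would give a point of `K` closer than `δ` to `Λ`.
-/

open Pointwise Set

theorem IsCompact.exists_mem_forall_infDist_le_dist {α : Type*} [PseudoMetricSpace α]
    {K L : Set α} (hK : IsCompact K) (hKne : K.Nonempty) :
    ∃ p ∈ K, ∀ x ∈ K, ∀ w ∈ L, Metric.infDist p L ≤ dist x w := by
  obtain ⟨p, hpK, hpmin⟩ :=
    hK.exists_isMinOn hKne (Metric.continuous_infDist_pt L).continuousOn
  exact ⟨p, hpK, fun x hx w hw => (hpmin hx).trans (Metric.infDist_le_dist_of_mem hw)⟩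

section

variable {E : Type*} [NormedAddCommGroup E] [NormedSpace ℝ E]

theorem homothety_add_smul_sub_eq {p q u : E} {t : ℝ} (ht : t ≠ 0) :
    AffineMap.homothety p t⁻¹ (q + t • u) - (u + q) = (1 - t⁻¹) • (p - q) := by
  rw [AffineMap.homothety_apply, vsub_eq_sub, vadd_eq_add, smul_sub, smul_add, smul_smul,
    inv_mul_cancel₀ ht, one_smul]
  module

theorem Convex.exists_disjoint_vadd_smul {K : Set E} {L : AddSubmonoid E}
    (hKconv : Convex ℝ K) (hKcomp : IsCompact K) (hL : IsClosed (L : Set E))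
    (hdisj : Disjoint K L) {t : ℝ} (ht : 1 < t) :
    ∃ v ∈ L, Disjoint K (v +ᵥ t • (L : Set E)) := by
  rcases K.eq_empty_or_nonempty with rfl | hKne
  · exact ⟨0, L.zero_mem, empty_disjoint _⟩
  have hLne : (L : Set E).Nonempty := ⟨0, L.zero_mem⟩
  obtain ⟨p, hpK, hp⟩ := hKcomp.exists_mem_forall_infDist_le_dist (L := (L : Set E)) hKne
  set δ := Metric.infDist p (L : Set E)
  have hδ : 0 < δ := (hL.notMem_iff_infDist_pos hLne).1 (hdisj.notMem_of_mem_left hpK)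
  have ht0 : 0 < t := zero_lt_one.trans ht
  have hs : 0 < 1 - t⁻¹ := sub_pos.2 (inv_lt_one_of_one_lt₀ ht)
  obtain ⟨q, hqL, hpq⟩ : ∃ q ∈ L, dist p q < δ / (1 - t⁻¹) :=
    (Metric.infDist_lt_iff hLne).1 <|
      (lt_div_iff₀ hs).2 (mul_lt_of_lt_one_right hδ (sub_lt_self 1 (inv_pos.2 ht0)))
  refine ⟨q, hqL, disjoint_left.2 ?_⟩
  rintro _ hxK ⟨_, ⟨u, huL, rfl⟩, rfl⟩
  have hzK : AffineMap.homothety p t⁻¹ (q + t • u) ∈ K := by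
    rw [AffineMap.homothety_eq_lineMap]
    exact hKconv.lineMap_mem hpK hxK ⟨(inv_pos.2 ht0).le, inv_le_one_of_one_le₀ ht.le⟩
  have hclose : dist (AffineMap.homothety p t⁻¹ (q + t • u)) (u + q) < δ := by
    rw [dist_eq_norm, homothety_add_smul_sub_eq ht0.ne', norm_smul, Real.norm_of_nonneg hs.le,
      ← dist_eq_norm]
    exact (lt_div_iff₀' hs).1 hpq
  exact (hp _ hzK _ (L.add_mem huL hqL)).not_gt hclose

end

theorem stmt2_general {d : ℕ} (K : Set (Fin d → ℝ)) (Λ : Submodule ℤ (Fin d → ℝ))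
    [DiscreteTopology Λ]
    (hKconv : Convex ℝ K) (hKcomp : IsCompact K)
    (hdisj : K ∩ (Λ : Set (Fin d → ℝ)) = ∅) (t : ℝ) (ht : 1 < t) :
    ∃ v ∈ Λ, K ∩ (v +ᵥ (t • (Λ : Set (Fin d → ℝ)))) = ∅ := by
  have hΛ : IsClosed (Λ : Set (Fin d → ℝ)) :=
    AddSubgroup.isClosed_of_discrete (H := Λ.toAddSubgroup)
  simp only [← disjoint_iff_inter_eq_empty] at hdisj ⊢
  exact hKconv.exists_disjoint_vadd_smul (L := Λ.toAddSubmonoid) hKcomp hΛ hdisj ht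

theorem stmt2 {d : ℕ} (K : Set (Fin d → ℝ)) (Λ : Submodule ℤ (Fin d → ℝ))
    [DiscreteTopology Λ] [IsZLattice ℝ Λ]
    (hKconv : Convex ℝ K) (hKcomp : IsCompact K) (hKint : (interior K).Nonempty)
    (hdisj : K ∩ (Λ : Set (Fin d → ℝ)) = ∅) (t : ℝ) (ht : 1 < t) :
    ∃ v ∈ Λ, K ∩ (v +ᵥ (t • (Λ : Set (Fin d → ℝ)))) = ∅ :=
  stmt2_general K Λ hKconv hKcomp hdisj t ht
end

section
/- Let K be a convex body in ℝ^d, Λ a lattice, and q_i = ⌊2/λ_i(K,Λ) + 1⌋ where λ_i are the successive minima of (1/2)(K−K). Let n_1,…,n_d be integers such that n_{i+1} divides n_i for 1 ≤ i ≤ d−1 and q_i ≤ n_i for all i. Then G(K,Λ) ≤ n_1·n_2⋯n_d. -/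
/-!
Put `C = ½(K - K)` and `tᵢ = 2 / nᵢ`. Since `tᵢ < λᵢ₊₁`, the lattice vectors in `tᵢ C` span a
subspace `Vᵢ` of dimension at most `i` (indices from `0`), and `Vᵢ` grows with `i` because
`nᵢ₊₁ ∣ nᵢ`. Every `Λ ∩ Vᵢ` is a saturated sublattice, so `Λ` has a basis adapted to this chain:
the lattice vectors of `tⱼ C` have vanishing coordinates from index `j` on.
If `K` held more than `∏ nᵢ` lattice points, two of them, `x ≠ y`, would agree coordinatewise
modulo the `nᵢ`. Let `j` be the last index where `x - y` has a nonzero coordinate; by the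
divisibility chain `w = (x - y) / nⱼ` is a lattice vector, and `w ∈ tⱼ C`, yet its `j`-th
coordinate is nonzero.
-/

open Pointwise Set

open Module Topology Filter

theorem Submodule.exists_isCompl_of_smul_mem {R M : Type*} [CommRing R] [IsDomain R]
    [IsPrincipalIdealRing R] [AddCommGroup M] [Module R M] [Module.Finite R M]
    (N : Submodule R M) (hN : ∀ (k : R) (x : M), k ≠ 0 → k • x ∈ N → x ∈ N) :
    ∃ S : Submodule R M, IsCompl N S := by
  have : IsTorsionFree R (M ⧸ N) := .of_smul_eq_zero fun k x hkx => by
    obtain ⟨x, rfl⟩ := N.mkQ_surjective x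
    rw [← map_smul, Submodule.mkQ_apply, Submodule.Quotient.mk_eq_zero] at hkx
    rw [Submodule.mkQ_apply, Submodule.Quotient.mk_eq_zero]
    exact or_iff_not_imp_left.2 fun hk => hN k x hk hkx
  obtain ⟨s, hs⟩ := N.mkQ.exists_rightInverse_of_surjective N.range_mkQ
  have hidem : IsIdempotentElem (s ∘ₗ N.mkQ) := by
    change s ∘ₗ (N.mkQ ∘ₗ s) ∘ₗ N.mkQ = s ∘ₗ N.mkQ
    rw [hs, LinearMap.id_comp]
  refine ⟨LinearMap.range (s ∘ₗ N.mkQ), ?_⟩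
  have hker : LinearMap.ker (s ∘ₗ N.mkQ) = N := by
    rw [LinearMap.ker_comp_of_ker_eq_bot _ (LinearMap.ker_eq_bot_of_inverse hs), N.ker_mkQ]
  simpa [hker] using (LinearMap.IsIdempotentElem.isCompl hidem).symm

theorem Module.exists_basis_repr_eq_zero_of_chain {R : Type*} [CommRing R] [IsDomain R]
    [IsPrincipalIdealRing R] {d : ℕ} {M : Type*} [AddCommGroup M] [Module R M] [Module.Free R M]
    [Module.Finite R M] (hM : finrank R M = d) (W : Fin d → Submodule R M) (hW : Monotone W)
    (hsat : ∀ j (k : R) (x : M), k ≠ 0 → k • x ∈ W j → x ∈ W j)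
    (hrank : ∀ j, finrank R (W j) ≤ j) :
    ∃ b : Basis (Fin d) R M, ∀ j, ∀ x ∈ W j, ∀ i, j ≤ i → b.repr x i = 0 := by
  induction d using Nat.strong_induction_on generalizing M with
  | _ d ih =>
    rcases d with _ | d
    · exact ⟨finBasisOfFinrankEq R M hM, fun j => j.elim0⟩
    set N := W (Fin.last d)
    have hNd : finrank R N ≤ d := hrank (Fin.last d)
    obtain ⟨c, hc⟩ := ih (finrank R N) (by omega) rfl
      (fun j => (W (Fin.castLE (by omega) j)).comap N.subtype)
      (fun i j hij => Submodule.comap_mono (hW ((Fin.castLE_le_castLE_iff _).2 hij)))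
      (fun j k x hk hkx => hsat _ k x hk hkx)
      (fun j => (LinearEquiv.finrank_eq (Submodule.comapSubtypeEquivOfLe
        (hW (Fin.le_last _)))).trans_le (hrank _))
    obtain ⟨S, hNS⟩ := N.exists_isCompl_of_smul_mem (hsat _)
    set e := Submodule.prodEquivOfIsCompl N S hNS
    have hrS : finrank R N + finrank R S = d + 1 := by
      rw [← finrank_prod, e.finrank_eq, hM]
    set σ := finSumFinEquiv.trans (finCongr hrS)
    refine ⟨((c.prod (finBasis R S)).map e).reindex σ, fun j x hx i hji => ?_⟩
    have hxN : x ∈ N := hW (Fin.le_last j) hx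
    obtain ⟨i, rfl⟩ := σ.surjective i
    rw [Basis.repr_reindex_apply, Equiv.symm_apply_apply, Basis.map_repr, LinearEquiv.trans_apply,
      Submodule.prodEquivOfIsCompl_symm_apply_left _ _ hNS ⟨x, hxN⟩]
    rcases i with a | a
    · rw [Basis.prod_repr_inl]
      have hja : j.val ≤ a.val := by simpa [σ, Fin.le_def] using hji
      exact hc ⟨j, by omega⟩ ⟨x, hxN⟩ hx a hja
    · simp

theorem Fin.dvd_of_le_of_forall_succ_dvd {α : Type*} [Monoid α] {d : ℕ} {n : Fin d → α}
    (h : ∀ i : Fin d, ∀ h : i.val + 1 < d, n ⟨i.val + 1, h⟩ ∣ n i) {i j : Fin d} (hij : i ≤ j) :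
    n j ∣ n i := by
  obtain ⟨i, hi⟩ := i
  obtain ⟨j, hj⟩ := j
  replace hij : i ≤ j := hij
  induction j, hij using Nat.le_induction with
  | base => rfl
  | succ k _ ih => exact (h ⟨k, by omega⟩ hj).trans (ih (by omega))

theorem Module.Basis.exists_ne_dvd_repr_sub {ι M : Type*} [Fintype ι] [AddCommGroup M]
    (b : Basis ι ℤ M) (n : ι → ℕ) [∀ i, NeZero (n i)] {A : Set M} (hA : ∏ i, n i < A.ncard) :
    ∃ x ∈ A, ∃ y ∈ A, x ≠ y ∧ ∀ i, (n i : ℤ) ∣ b.repr (x - y) i := by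
  obtain ⟨x, hx, y, hy, hxy, heq⟩ := Set.exists_ne_map_eq_of_ncard_lt_of_maps_to
    (t := Set.univ) (f := fun x i => (b.repr x i : ZMod (n i)))
    (by simpa [Set.ncard_univ, Nat.card_pi] using hA) (fun _ _ => trivial)
  refine ⟨x, hx, y, hy, hxy, fun i => ?_⟩
  rw [← ZMod.intCast_zmod_eq_zero_iff_dvd, map_sub, Finsupp.sub_apply, Int.cast_sub, sub_eq_zero]
  exact congrFun heq i

theorem Module.Basis.exists_eq_smul_repr_ne_zero {ι R M : Type*} [LinearOrder ι] [Fintype ι]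
    [CommRing R] [AddCommGroup M] [Module R M] (b : Basis ι R M) {n : ι → R}
    (hn : ∀ i j, i ≤ j → n j ∣ n i) {z : M} (hz : z ≠ 0) (hdvd : ∀ i, n i ∣ b.repr z i) :
    ∃ j w, z = n j • w ∧ b.repr w j ≠ 0 := by
  have hsupp : (b.repr z).support.Nonempty := by simpa using hz
  set j := (b.repr z).support.max' hsupp
  have hj : b.repr z j ≠ 0 := Finsupp.mem_support_iff.1 ((b.repr z).support.max'_mem hsupp)
  have hdvd_j : ∀ i, n j ∣ b.repr z i := fun i => by
    rcases le_or_gt i j with hij | hji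
    · exact (hn i j hij).trans (hdvd i)
    · rw [Finsupp.notMem_support_iff.1 fun hi => hji.not_ge ((b.repr z).support.le_max' i hi)]
      exact dvd_zero _
  choose c hc using hdvd_j
  have hzc : z = n j • b.equivFun.symm c := b.equivFun.injective <| by
    rw [map_smul, b.equivFun.apply_symm_apply]
    exact funext fun i => by simp [hc i]
  refine ⟨j, _, hzc, fun hcj => hj ?_⟩
  rw [hzc, map_smul, Finsupp.smul_apply, hcj, smul_zero]

theorem Module.Basis.ncard_le_prod {ι M : Type*} [Fintype ι] [LinearOrder ι] [AddCommGroup M]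
    (b : Basis ι ℤ M) (n : ι → ℕ) [∀ i, NeZero (n i)] (hn : ∀ i j, i ≤ j → n j ∣ n i) {A : Set M}
    (hA : ∀ j, ∀ x ∈ A, ∀ y ∈ A, ∀ w, x - y = (n j : ℤ) • w → b.repr w j = 0) :
    A.ncard ≤ ∏ i, n i := by
  by_contra! hlt
  obtain ⟨x, hx, y, hy, hxy, hdvd⟩ := b.exists_ne_dvd_repr_sub n hlt
  obtain ⟨j, w, hw, hwj⟩ := b.exists_eq_smul_repr_ne_zero (n := fun i => (n i : ℤ))
    (fun i j hij => Int.natCast_dvd_natCast.2 (hn i j hij)) (sub_ne_zero.2 hxy) hdvd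
  exact hwj (hA j x hx y hy w hw)

theorem Submodule.finrank_comap_subtype_restrictScalars_le {E : Type*} [NormedAddCommGroup E]
    [NormedSpace ℝ E] [FiniteDimensional ℝ E] (Λ : Submodule ℤ E) [DiscreteTopology Λ]
    (V : Submodule ℝ E) : finrank ℤ ((V.restrictScalars ℤ).comap Λ.subtype) ≤ finrank ℝ V := by
  set P := ((V.restrictScalars ℤ).comap Λ.subtype).map Λ.subtype
  have hPΛ : P ≤ Λ := Submodule.map_subtype_le Λ _
  have : DiscreteTopology (Submodule.span ℤ (P : Set E)) := by
    rw [Submodule.span_eq, ← SetLike.isDiscrete_iff_discreteTopology]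
    exact (DiscreteTopology.isDiscrete (s := (Λ : Set E))).mono hPΛ
  have hrank := Real.finrank_eq_int_finrank_of_discrete this
  rw [Set.finrank, Set.finrank, Submodule.span_eq] at hrank
  rw [LinearEquiv.finrank_eq (Submodule.equivMapOfInjective _ Λ.injective_subtype _), ← hrank]
  refine Submodule.finrank_mono (Submodule.span_le.2 ?_)
  rintro _ ⟨x, hx, rfl⟩
  exact hx

theorem Submodule.mem_comap_restrictScalars_of_zsmul_mem {K E M : Type*} [Field K] [CharZero K]
    [AddCommGroup E] [Module K E] [AddCommGroup M] (f : M →ₗ[ℤ] E) (V : Submodule K E)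
    {k : ℤ} (hk : k ≠ 0) {x : M} (h : k • x ∈ (V.restrictScalars ℤ).comap f) :
    x ∈ (V.restrictScalars ℤ).comap f := by
  rw [Submodule.mem_comap, map_zsmul, ← Int.cast_smul_eq_zsmul K] at h
  simpa [hk] using V.smul_mem (k : K)⁻¹ h

theorem sub_self_mem_nhds_zero {G : Type*} [AddGroup G] [TopologicalSpace G]
    [IsTopologicalAddGroup G] {K : Set G} (hK : (interior K).Nonempty) : K - K ∈ 𝓝 0 := by
  obtain ⟨x, hx⟩ := hK
  have : (· + x) ⁻¹' K ∈ 𝓝 0 := (continuous_add_const x).continuousAt.preimage_mem_nhds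
    (by simpa using mem_interior_iff_mem_nhds.1 hx)
  exact mem_of_superset this fun y hy =>
    ⟨y + x, hy, x, interior_subset hx, add_sub_cancel_right y x⟩

theorem StarConvex.smul_subset_smul_of_le {E : Type*} [AddCommGroup E] [Module ℝ E] {C : Set E}
    (hC : StarConvex ℝ 0 C) {a b : ℝ} (ha : 0 < a) (hab : a ≤ b) : a • C ⊆ b • C := by
  rintro _ ⟨x, hx, rfl⟩
  have hb : 0 < b := ha.trans_le hab
  refine ⟨(a / b) • x, hC.smul_mem hx (by positivity) (div_le_one_of_le₀ hab hb.le), ?_⟩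
  change b • (a / b) • x = a • x
  rw [smul_smul, mul_div_cancel₀ _ hb.ne']

theorem Convex.starConvex_smul_sub_self {E : Type*} [AddCommGroup E] [Module ℝ E] {K : Set E}
    (hK : Convex ℝ K) (hne : K.Nonempty) (c : ℝ) : StarConvex ℝ 0 (c • (K - K)) :=
  ((hK.sub hK).smul c).starConvex (zero_mem_smul_set hne.zero_mem_sub)

theorem exists_span_smul_inter_eq_top {E : Type*} [NormedAddCommGroup E] [NormedSpace ℝ E]
    [FiniteDimensional ℝ E] {C s : Set E} (hC : C ∈ 𝓝 0) (hs : Submodule.span ℝ s = ⊤) :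
    ∃ t : ℝ, 0 < t ∧ Submodule.span ℝ (t • C ∩ s) = ⊤ := by
  obtain ⟨b, hbs, hspan, hli⟩ := exists_linearIndependent ℝ s
  obtain ⟨r, hr⟩ := absorbs_iff_norm.1
    ((absorbent_nhds_zero (𝕜 := ℝ) hC).absorbs_finite hli.set_finite_of_isNoetherian)
  have hb : b ⊆ max r 1 • C ∩ s := fun x hx =>
    ⟨hr (max r 1) (by simp [abs_of_pos (lt_max_of_lt_right one_pos)]) hx, hbs hx⟩
  refine ⟨max r 1, lt_max_of_lt_right one_pos, top_unique ?_⟩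
  rw [← hs, ← hspan]
  exact Submodule.span_mono hb

theorem finrank_span_smul_inter_lt_of_lt_succMin {d i : ℕ} {C : Set (Fin d → ℝ)}
    {Λ : Submodule ℤ (Fin d → ℝ)} {t : ℝ} (ht : 0 < t) (hlt : t < succMin i C Λ) :
    finrank ℝ (Submodule.span ℝ (t • C ∩ Λ)) < i := by
  by_contra! h
  exact hlt.not_ge (csInf_le ⟨0, fun s hs => hs.1.le⟩ ⟨ht, h⟩)

theorem succMin_pos {d i : ℕ} {C : Set (Fin d → ℝ)} {Λ : Submodule ℤ (Fin d → ℝ)}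
    [DiscreteTopology Λ] [IsZLattice ℝ Λ] (hC : C ∈ 𝓝 0) (hCb : Bornology.IsBounded C)
    (hi : 1 ≤ i) (hid : i ≤ d) : 0 < succMin i C Λ := by
  obtain ⟨ρ, hρ, hball⟩ := Metric.exists_ball_inter_eq_singleton_of_mem_discrete
    (DiscreteTopology.isDiscrete (s := (Λ : Set (Fin d → ℝ)))) Λ.zero_mem
  obtain ⟨R, hR, hCR⟩ := hCb.exists_pos_norm_le
  obtain ⟨t₀, ht₀, htop⟩ := exists_span_smul_inter_eq_top hC (IsZLattice.span_top (L := Λ))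
  refine (div_pos hρ hR).trans_le (le_csInf ⟨t₀, ht₀, ?_⟩ ?_)
  · rwa [htop, finrank_top, finrank_fin_fun]
  rintro t ⟨ht, hrank⟩
  obtain ⟨_, ⟨⟨c, hc, rfl⟩, hcΛ⟩, hc0⟩ : ∃ x ∈ t • C ∩ Λ, x ≠ 0 := by
    by_contra! h
    rw [Submodule.span_eq_bot.2 h, finrank_bot] at hrank
    omega
  have hρc : ρ ≤ ‖t • c‖ := by
    by_contra! hlt
    exact hc0 (hball.subset ⟨mem_ball_zero_iff.2 hlt, hcΛ⟩)
  have hct : ‖t • c‖ ≤ t * R := by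
    rw [norm_smul, Real.norm_of_nonneg ht.le]
    exact mul_le_mul_of_nonneg_left (hCR c hc) ht.le
  rw [div_le_iff₀ hR]
  linarith

theorem lam_pos {d i : ℕ} {K : Set (Fin d → ℝ)} {Λ : Submodule ℤ (Fin d → ℝ)}
    [DiscreteTopology Λ] [IsZLattice ℝ Λ] (hKcomp : IsCompact K) (hKint : (interior K).Nonempty)
    (hi : 1 ≤ i) (hid : i ≤ d) : 0 < lam i K Λ :=
  succMin_pos ((set_smul_mem_nhds_zero_iff (by norm_num)).2 (sub_self_mem_nhds_zero hKint))
    ((hKcomp.isBounded.sub hKcomp.isBounded).smul₀ _) hi hid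

theorem two_div_lt_of_floor_le {l : ℝ} {m : ℤ} (hl : 0 < l) (h : ⌊2 / l + 1⌋ ≤ m) :
    0 < m ∧ 2 / (m : ℝ) < l := by
  have hm : 2 / l < m := by
    have := Int.lt_floor_add_one (2 / l + 1)
    have : ((⌊2 / l + 1⌋ : ℤ) : ℝ) ≤ m := by exact_mod_cast h
    linarith
  have hm0 : (0 : ℝ) < m := (div_pos two_pos hl).trans hm
  exact ⟨by exact_mod_cast hm0, (div_lt_comm₀ hm0 hl).2 hm⟩

theorem ZLattice.exists_basis_repr_eq_zero_of_lt_succMin {d : ℕ} {C : Set (Fin d → ℝ)}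
    (Λ : Submodule ℤ (Fin d → ℝ)) [DiscreteTopology Λ] [IsZLattice ℝ Λ] (hC : StarConvex ℝ 0 C)
    {t : Fin d → ℝ} (ht0 : ∀ j, 0 < t j) (ht : Monotone t)
    (hlt : ∀ j : Fin d, t j < succMin (j + 1) C Λ) :
    ∃ b : Basis (Fin d) ℤ Λ,
      ∀ j (w : Λ), (w : Fin d → ℝ) ∈ t j • C → ∀ i, j ≤ i → b.repr w i = 0 := by
  set V : Fin d → Submodule ℝ (Fin d → ℝ) := fun j => Submodule.span ℝ (t j • C ∩ Λ)
  obtain ⟨b, hb⟩ := exists_basis_repr_eq_zero_of_chain (R := ℤ) (M := Λ)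
    (by rw [ZLattice.rank ℝ Λ, finrank_fin_fun])
    (fun j => ((V j).restrictScalars ℤ).comap Λ.subtype)
    (fun i j hij => Submodule.comap_mono <| Submodule.span_mono <| inter_subset_inter_left _ <|
      hC.smul_subset_smul_of_le (ht0 i) (ht hij))
    (fun j k x hk => Submodule.mem_comap_restrictScalars_of_zsmul_mem _ _ hk)
    (fun j => (Submodule.finrank_comap_subtype_restrictScalars_le Λ (V j)).trans <|
      Nat.lt_succ_iff.1 <| finrank_span_smul_inter_lt_of_lt_succMin (ht0 j) (hlt j))
  exact ⟨b, fun j w hw => hb j w (Submodule.subset_span ⟨hw, w.2⟩)⟩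

theorem Submodule.coe_mem_two_div_smul_half_sub {E : Type*} [AddCommGroup E] [Module ℝ E]
    {Λ : Submodule ℤ E} {K : Set E} {x y w : Λ} (hx : (x : E) ∈ K) (hy : (y : E) ∈ K) {m : ℕ}
    (hm : m ≠ 0) (hw : x - y = (m : ℤ) • w) : (w : E) ∈ (2 / (m : ℝ)) • ((2 : ℝ)⁻¹ • (K - K)) := by
  have hxy : (x : E) - y = (m : ℝ) • (w : E) := by
    rw [← Submodule.coe_sub, hw, Submodule.coe_smul, natCast_zsmul, Nat.cast_smul_eq_nsmul]
  rw [smul_smul, div_mul_eq_mul_div, mul_inv_cancel₀ two_ne_zero, one_div,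
    ← inv_smul_smul₀ (Nat.cast_ne_zero.2 hm : (m : ℝ) ≠ 0) (w : E), ← hxy]
  exact smul_mem_smul_set (sub_mem_sub hx hy)

theorem latCount_eq_ncard_preimage {d : ℕ} (K : Set (Fin d → ℝ)) (Λ : Submodule ℤ (Fin d → ℝ)) :
    latCount K Λ = (((↑) : Λ → Fin d → ℝ) ⁻¹' K).ncard := by
  rw [← Set.ncard_image_of_injective _ Subtype.val_injective, image_preimage_eq_inter_range,
    Subtype.range_coe_subtype]
  rfl

theorem stmt4 {d : ℕ} (K : Set (Fin d → ℝ)) (Λ : Submodule ℤ (Fin d → ℝ))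
    [DiscreteTopology Λ] [IsZLattice ℝ Λ]
    (hKconv : Convex ℝ K) (hKcomp : IsCompact K) (hKint : (interior K).Nonempty)
    (n : Fin d → ℤ)
    (hdvd : ∀ i : Fin d, ∀ h : i.val + 1 < d, n ⟨i.val + 1, h⟩ ∣ n i)
    (hq : ∀ i : Fin d, ⌊2 / lam (i.val + 1) K Λ + 1⌋ ≤ n i) :
    (latCount K Λ : ℤ) ≤ ∏ i : Fin d, n i := by
  have hlam (i : Fin d) : 0 < n i ∧ 2 / (n i : ℝ) < lam (i + 1) K Λ :=
    two_div_lt_of_floor_le (lam_pos hKcomp hKint (by omega) i.2) (hq i)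
  lift n to Fin d → ℕ using fun i => (hlam i).1.le
  simp only [Nat.cast_pos, Int.cast_natCast, Int.natCast_dvd_natCast] at hlam hdvd ⊢
  have hn (i j : Fin d) (hij : i ≤ j) : n j ∣ n i := Fin.dvd_of_le_of_forall_succ_dvd hdvd hij
  have : ∀ i, NeZero (n i) := fun i => ⟨(hlam i).1.ne'⟩
  obtain ⟨b, hb⟩ := ZLattice.exists_basis_repr_eq_zero_of_lt_succMin Λ
    (hKconv.starConvex_smul_sub_self (hKint.mono interior_subset) _)
    (t := fun j => 2 / (n j : ℝ)) (fun j => div_pos two_pos (by exact_mod_cast (hlam j).1))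
    (fun i j hij => div_le_div_of_nonneg_left zero_le_two (by exact_mod_cast (hlam j).1)
      (by exact_mod_cast Nat.le_of_dvd (hlam i).1 (hn i j hij)))
    (fun j => (hlam j).2)
  rw [latCount_eq_ncard_preimage]
  exact_mod_cast b.ncard_le_prod n hn fun j x hx y hy w hw =>
    hb j w (Submodule.coe_mem_two_div_smul_half_sub hx hy (hlam j).1.ne' hw) j le_rfl
end

section
/- Let K be a (not necessarily 0-symmetric) convex body in ℝ^d and Λ a lattice. Then G(K,Λ) ≤ ⌊2/λ_1(K,Λ) + 1⌋^d, where λ_1(K,Λ) is the first successive minimum of (1/2)(K−K) with respect to Λ. -/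
open Pointwise Set

/-!
Put `M = ⌊2/λ₁⌋ + 1 > 2/λ₁` and reduce the lattice points of `K` modulo `MΛ`.
If two distinct points `x, y ∈ K ∩ Λ` had the same residue, `w = (x - y)/M` would be a nonzero
lattice point in `(2/M) • ½(K - K)`, forcing `λ₁ ≤ 2/M`; the same witness, together with the
boundedness of `K` and the discreteness of `Λ`, gives `λ₁ > 0`, which also settles the
degenerate case `λ₁ = 0` (where `2/λ₁ = 0` and `M = 1`). Hence `K ∩ Λ` injects into
`Λ/MΛ ≅ (ℤ/M)^d`.
-/

lemma one_le_finrank_span_iff {K E : Type*} [DivisionRing K] [AddCommGroup E] [Module K E]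
    [FiniteDimensional K E] {s : Set E} :
    1 ≤ Module.finrank K (Submodule.span K s) ↔ ∃ y ∈ s, y ≠ 0 := by
  simp [Submodule.one_le_finrank_iff, Submodule.span_eq_bot]

lemma Submodule.exists_pos_le_norm_of_discrete {E : Type*} [NormedAddCommGroup E]
    (Λ : Submodule ℤ E) [DiscreteTopology Λ] :
    ∃ ε > 0, ∀ x ∈ Λ, x ≠ 0 → ε ≤ ‖x‖ := by
  obtain ⟨ε, hε, hball⟩ := Metric.isOpen_singleton_iff.1 (isOpen_discrete {(0 : Λ)})
  refine ⟨ε, hε, fun x hx hx0 => le_of_not_gt fun hlt => hx0 ?_⟩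
  simpa using hball ⟨x, hx⟩ (by simpa using hlt)

lemma ncard_le_pow_finrank_of_sub_eq_nsmul {L : Type*} [AddCommGroup L] [Module.Free ℤ L]
    [Module.Finite ℤ L] (M : ℕ) [NeZero M] {s : Set L}
    (hs : ∀ x ∈ s, ∀ y ∈ s, ∀ w : L, x - y = M • w → x = y) :
    s.ncard ≤ M ^ Module.finrank ℤ L := by
  let b := Module.Free.chooseBasis ℤ L
  let f : L → Module.Free.ChooseBasisIndex ℤ L → ZMod M := fun x i => (b.equivFun x i : ZMod M)
  have hf : InjOn f s := by
    intro x hx y hy hxy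
    have hdvd : ∀ i, (M : ℤ) ∣ b.equivFun (x - y) i := fun i => by
      rw [← ZMod.intCast_zmod_eq_zero_iff_dvd, map_sub, Pi.sub_apply, Int.cast_sub,
        sub_eq_zero]
      exact congrFun hxy i
    refine hs x hx y hy (b.equivFun.symm fun i => b.equivFun (x - y) i / M) ?_
    apply b.equivFun.injective
    ext i
    rw [map_nsmul, LinearEquiv.apply_symm_apply, Pi.smul_apply, nsmul_eq_mul,
      Int.mul_ediv_cancel' (hdvd i)]
  calc s.ncard ≤ (univ : Set (Module.Free.ChooseBasisIndex ℤ L → ZMod M)).ncard :=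
        ncard_le_ncard_of_injOn f (fun _ _ => mem_univ _) hf
    _ = M ^ Module.finrank ℤ L := by
        rw [ncard_univ, Nat.card_eq_fintype_card, Fintype.card_fun, ZMod.card,
          Module.finrank_eq_card_chooseBasisIndex]

section FirstMinimum

variable {d : ℕ} {C : Set (Fin d → ℝ)} {Λ : Submodule ℤ (Fin d → ℝ)} {t : ℝ} {y : Fin d → ℝ}

lemma succMin_nonneg (i : ℕ) (C : Set (Fin d → ℝ)) (Λ : Submodule ℤ (Fin d → ℝ)) :
    0 ≤ succMin i C Λ :=
  Real.sInf_nonneg fun _ h => h.1.le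

lemma succMin_one_le (ht : 0 < t) (hy : y ∈ t • C ∩ Λ) (hy0 : y ≠ 0) : succMin 1 C Λ ≤ t :=
  csInf_le ⟨0, fun _ h => h.1.le⟩ ⟨ht, one_le_finrank_span_iff.2 ⟨y, hy, hy0⟩⟩

lemma succMin_one_pos [DiscreteTopology Λ] (hC : Bornology.IsBounded C) (ht : 0 < t)
    (hy : y ∈ t • C ∩ Λ) (hy0 : y ≠ 0) : 0 < succMin 1 C Λ := by
  obtain ⟨ε, hε, hΛ⟩ := Λ.exists_pos_le_norm_of_discrete
  obtain ⟨R, hR, hCR⟩ := hC.subset_closedBall_lt 0 0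
  refine (div_pos hε hR).trans_le (le_csInf ⟨t, ht, one_le_finrank_span_iff.2 ⟨y, hy, hy0⟩⟩ ?_)
  rintro s ⟨hs, hrank⟩
  obtain ⟨_, ⟨⟨c, hc, rfl⟩, hcΛ⟩, hc0⟩ := one_le_finrank_span_iff.1 hrank
  rw [div_le_iff₀ hR]
  calc ε ≤ ‖s • c‖ := hΛ _ hcΛ hc0
    _ = s * ‖c‖ := by rw [norm_smul, Real.norm_of_nonneg hs.le]
    _ ≤ s * R := by gcongr; simpa using hCR hc

end FirstMinimum

lemma inv_smul_sub_mem_smul_halfDiff {E : Type*} [AddCommGroup E] [Module ℝ E] {K : Set E}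
    {x y : E} (c : ℝ) (hx : x ∈ K) (hy : y ∈ K) :
    c⁻¹ • (x - y) ∈ (2 / c) • ((2 : ℝ)⁻¹ • (K - K)) :=
  ⟨(2 : ℝ)⁻¹ • (x - y), smul_mem_smul_set (sub_mem_sub hx hy), by
    change (2 / c) • (2⁻¹ : ℝ) • (x - y) = _
    rw [smul_smul]; ring_nf⟩

lemma eq_of_sub_eq_nsmul_of_div_lam_lt {d : ℕ} {K : Set (Fin d → ℝ)}
    {Λ : Submodule ℤ (Fin d → ℝ)} [DiscreteTopology Λ] (hK : Bornology.IsBounded K) {M : ℕ}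
    (hM : 2 / lam 1 K Λ < M) {x y w : Fin d → ℝ} (hx : x ∈ K) (hy : y ∈ K) (hw : w ∈ Λ)
    (hxyw : x - y = M • w) : x = y := by
  by_contra hxy
  have hM0 : (0 : ℝ) < M := (div_nonneg zero_le_two (succMin_nonneg _ _ _)).trans_lt hM
  have hw' : w = (M : ℝ)⁻¹ • (x - y) := by
    rw [hxyw, ← Nat.cast_smul_eq_nsmul ℝ, inv_smul_smul₀ hM0.ne']
  have hw0 : w ≠ 0 := by
    rintro rfl
    exact hxy (sub_eq_zero.1 (by simpa using hxyw))
  have hwC : w ∈ (2 / (M : ℝ)) • ((2 : ℝ)⁻¹ • (K - K)) ∩ Λ :=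
    ⟨hw' ▸ inv_smul_sub_mem_smul_halfDiff _ hx hy, hw⟩
  have hC : Bornology.IsBounded ((2 : ℝ)⁻¹ • (K - K)) := (hK.sub hK).smul₀ _
  have hpos : 0 < lam 1 K Λ := succMin_one_pos hC (by positivity) hwC hw0
  have hle : lam 1 K Λ ≤ 2 / M := succMin_one_le (by positivity) hwC hw0
  rw [div_lt_iff₀ hpos] at hM
  rw [le_div_iff₀ hM0] at hle
  linarith

theorem stmt5_general {d : ℕ} (K : Set (Fin d → ℝ)) (Λ : Submodule ℤ (Fin d → ℝ))
    [DiscreteTopology Λ] [IsZLattice ℝ Λ]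
    (hKcomp : IsCompact K) :
    (latCount K Λ : ℤ) ≤ (⌊2 / lam 1 K Λ + 1⌋) ^ d := by
  have h2lam : 0 ≤ 2 / lam 1 K Λ := div_nonneg zero_le_two (succMin_nonneg _ _ _)
  set M := ⌊2 / lam 1 K Λ⌋₊ + 1
  have hM : 2 / lam 1 K Λ < M := by simpa [M] using Nat.lt_floor_add_one _
  have hfloor : ⌊2 / lam 1 K Λ + 1⌋ = M := by
    rw [← Int.natCast_floor_eq_floor (by positivity), Nat.floor_add_one h2lam]
  set s := {x : Λ | (x : Fin d → ℝ) ∈ K}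
  have hcount : latCount K Λ = s.ncard := by
    rw [latCount, ← ncard_image_of_injective s Subtype.val_injective]
    congr 1
    ext x
    simp [s, and_comm]
  have hsep : ∀ x ∈ s, ∀ y ∈ s, ∀ w : Λ, x - y = M • w → x = y := fun x hx y hy w hxyw =>
    Subtype.ext <| eq_of_sub_eq_nsmul_of_div_lam_lt hKcomp.isBounded hM hx hy w.2
      (by simpa using congrArg Subtype.val hxyw)
  have hrank : Module.finrank ℤ Λ = d := by rw [ZLattice.rank ℝ Λ, Module.finrank_fin_fun]
  rw [hfloor, hcount]
  exact_mod_cast hrank ▸ ncard_le_pow_finrank_of_sub_eq_nsmul M hsep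

theorem stmt5 {d : ℕ} (K : Set (Fin d → ℝ)) (Λ : Submodule ℤ (Fin d → ℝ))
    [DiscreteTopology Λ] [IsZLattice ℝ Λ]
    (hKconv : Convex ℝ K) (hKcomp : IsCompact K) (hKint : (interior K).Nonempty) :
    (latCount K Λ : ℤ) ≤ (⌊2 / lam 1 K Λ + 1⌋) ^ d :=
  stmt5_general K Λ hKcomp
end

section
/- For every sequence of positive integers x_1 ≤ x_2 ≤ … ≤ x_d there exists a sequence of positive integers y_1, …, y_d with x_i ≤ y_i for all i, y_i dividing y_{i+1} for 1 ≤ i ≤ d−1, and (y_1⋯y_d)/(x_1⋯x_d) ≤ (4/e)·(√3)^{d−1}. -/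
/-!
Rounding every `x i` up to the least element above it of a fixed divisibility chain `S`
(positive and unbounded) always gives an admissible `y`: rounding is monotone, and any two
elements of `S` are comparable under `∣`. For `d ≤ 3` take `S = {x₀ 2^k}`; then `y₀ = x₀`
and `yᵢ ≤ 2 xᵢ`, which costs `2^(d-1)`. For `d ≥ 4` use the three chains `{2^k}`,
`{1} ∪ {3·2^k}` and `{1, 2} ∪ {10·2^k}`: for every `v ≥ 1` the three rounding ratios of `v`
multiply to at most `40/9`, so the best of the three chains costs at most `(40/9)^(d/3)`,
and `(40/9)^(1/3) < √3` leaves room for the factor `4/e` as soon as `d ≥ 4`.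
-/

open Real

namespace DivisibilityChain

noncomputable def roundUp (S : Set ℕ) (v : ℕ) : ℕ := sInf {s ∈ S | v ≤ s}

structure IsRoundingChain (S : Set ℕ) : Prop where
  isChain : IsChain (· ∣ ·) S
  zero_notMem : 0 ∉ S
  not_bddAbove : ¬BddAbove S

theorem roundUp_le {S : Set ℕ} {v s : ℕ} (hs : s ∈ S) (hv : v ≤ s) : roundUp S v ≤ s :=
  Nat.sInf_le ⟨hs, hv⟩

namespace IsRoundingChain

variable {S : Set ℕ}

theorem roundUp_mem_and_le (hS : IsRoundingChain S) (v : ℕ) :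
    roundUp S v ∈ S ∧ v ≤ roundUp S v := by
  obtain ⟨s, hs, hvs⟩ := not_bddAbove_iff.1 hS.not_bddAbove v
  exact Nat.sInf_mem (s := {s ∈ S | v ≤ s}) ⟨s, hs, hvs.le⟩

theorem roundUp_mem (hS : IsRoundingChain S) (v : ℕ) : roundUp S v ∈ S :=
  (hS.roundUp_mem_and_le v).1

theorem le_roundUp (hS : IsRoundingChain S) (v : ℕ) : v ≤ roundUp S v :=
  (hS.roundUp_mem_and_le v).2

theorem roundUp_pos (hS : IsRoundingChain S) (v : ℕ) : 0 < roundUp S v :=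
  Nat.pos_of_ne_zero fun h => hS.zero_notMem (h ▸ hS.roundUp_mem v)

theorem roundUp_dvd_roundUp (hS : IsRoundingChain S) {v w : ℕ} (h : v ≤ w) :
    roundUp S v ∣ roundUp S w := by
  have hle : roundUp S v ≤ roundUp S w :=
    roundUp_le (hS.roundUp_mem w) (h.trans (hS.le_roundUp w))
  obtain heq | hne := eq_or_ne (roundUp S v) (roundUp S w)
  · exact heq ▸ dvd_rfl
  obtain hvw | hwv := hS.isChain (hS.roundUp_mem v) (hS.roundUp_mem w) hne
  · exact hvw
  · exact absurd (le_antisymm hle (Nat.le_of_dvd (hS.roundUp_pos v) hwv)) hne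

theorem insert (hS : IsRoundingChain S) {a : ℕ} (ha : 0 < a) (hdvd : ∀ s ∈ S, a ∣ s) :
    IsRoundingChain (insert a S) where
  isChain := hS.isChain.insert fun b hb _ => .inl (hdvd b hb)
  zero_notMem := by simp [ha.ne, hS.zero_notMem]
  not_bddAbove h := hS.not_bddAbove (h.mono (Set.subset_insert a S))

end IsRoundingChain

def ladder (c : ℕ) : Set ℕ := Set.range (c * 2 ^ ·)

theorem isRoundingChain_ladder {c : ℕ} (hc : 0 < c) : IsRoundingChain (ladder c) where
  isChain := by
    rintro _ ⟨i, rfl⟩ _ ⟨j, rfl⟩ -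
    obtain h | h := le_total i j
    · exact .inl (mul_dvd_mul_left c (pow_dvd_pow 2 h))
    · exact .inr (mul_dvd_mul_left c (pow_dvd_pow 2 h))
  zero_notMem := by
    rintro ⟨k, hk⟩
    exact (Nat.mul_pos hc (Nat.two_pow_pos k)).ne' hk
  not_bddAbove := not_bddAbove_iff.2 fun v =>
    ⟨c * 2 ^ v, ⟨v, rfl⟩, Nat.lt_two_pow_self.trans_le (Nat.le_mul_of_pos_left _ hc)⟩

theorem roundUp_ladder_self {c : ℕ} (hc : 0 < c) : roundUp (ladder c) c = c :=
  le_antisymm (roundUp_le ⟨0, mul_one c⟩ le_rfl) ((isRoundingChain_ladder hc).le_roundUp c)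

theorem roundUp_ladder_le_two_mul {c v : ℕ} (hc : 0 < c) (hcv : c ≤ v) :
    roundUp (ladder c) v ≤ 2 * v := by
  obtain ⟨k, hk⟩ := (isRoundingChain_ladder hc).roundUp_mem v
  simp only at hk
  rw [← hk]
  cases k with
  | zero => simp only [pow_zero, mul_one]; omega
  | succ j =>
    have hlt : c * 2 ^ j < v := by
      by_contra! hle
      have := hk.trans_le (roundUp_le (s := c * 2 ^ j) ⟨j, rfl⟩ hle)
      have := Nat.mul_lt_mul_of_pos_left (Nat.pow_lt_pow_succ (le_refl 2) (n := j)) hc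
      omega
    rw [pow_succ, ← mul_assoc]
    omega

def roundingTrio : Fin 3 → Set ℕ :=
  ![ladder 1, insert 1 (ladder 3), insert 1 (insert 2 (ladder 10))]

theorem isRoundingChain_roundingTrio (s : Fin 3) : IsRoundingChain (roundingTrio s) := by
  fin_cases s
  · exact isRoundingChain_ladder one_pos
  · exact (isRoundingChain_ladder three_pos).insert one_pos fun _ _ => one_dvd _
  · refine ((isRoundingChain_ladder (by norm_num)).insert two_pos ?_).insert one_pos
      fun _ _ => one_dvd _
    rintro _ ⟨k, rfl⟩
    exact Dvd.intro (5 * 2 ^ k) (by ring)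

theorem nine_mul_prod_roundUp_roundingTrio_le {v : ℕ} (hv : 0 < v) :
    9 * ∏ s, roundUp (roundingTrio s) v ≤ 40 * v ^ 3 := by
  simp only [Fin.prod_univ_three, roundingTrio, Matrix.cons_val_zero, Matrix.cons_val_one,
    Matrix.cons_val_two, Matrix.head_cons, Matrix.tail_cons]
  have key : ∀ a b c, a ∈ ladder 1 → b ∈ insert 1 (ladder 3) →
      c ∈ insert 1 (insert 2 (ladder 10)) →
      v ≤ a ∧ v ≤ b ∧ v ≤ c ∧ 9 * (a * b * c) ≤ 40 * v ^ 3 →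
      9 * (roundUp (ladder 1) v * roundUp (insert 1 (ladder 3)) v *
        roundUp (insert 1 (insert 2 (ladder 10))) v) ≤ 40 * v ^ 3 :=
    fun a b c ha hb hc ⟨hva, hvb, hvc, h⟩ =>
      le_trans (by gcongr <;> apply roundUp_le <;> assumption) h
  obtain hv8 | hv8 := le_or_gt v 8
  · interval_cases v
    · exact key 1 1 1 ⟨0, rfl⟩ (.inl rfl) (.inl rfl) (by norm_num)
    · exact key 2 3 2 ⟨1, rfl⟩ (.inr ⟨0, rfl⟩) (.inr (.inl rfl)) (by norm_num)
    · exact key 4 3 10 ⟨2, rfl⟩ (.inr ⟨0, rfl⟩) (.inr (.inr ⟨0, rfl⟩)) (by norm_num)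
    · exact key 4 6 10 ⟨2, rfl⟩ (.inr ⟨1, rfl⟩) (.inr (.inr ⟨0, rfl⟩)) (by norm_num)
    · exact key 8 6 10 ⟨3, rfl⟩ (.inr ⟨1, rfl⟩) (.inr (.inr ⟨0, rfl⟩)) (by norm_num)
    · exact key 8 6 10 ⟨3, rfl⟩ (.inr ⟨1, rfl⟩) (.inr (.inr ⟨0, rfl⟩)) (by norm_num)
    · exact key 8 12 10 ⟨3, rfl⟩ (.inr ⟨2, rfl⟩) (.inr (.inr ⟨0, rfl⟩)) (by norm_num)
    · exact key 8 12 10 ⟨3, rfl⟩ (.inr ⟨2, rfl⟩) (.inr (.inr ⟨0, rfl⟩)) (by norm_num)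
  · obtain ⟨m, hm⟩ := Nat.exists_eq_add_of_le
      ((Nat.le_log_iff_pow_le (b := 2) (by norm_num) (by omega)).2 (by omega) : 3 ≤ Nat.log 2 v)
    have hlow : 8 * 2 ^ m ≤ v := by
      have := Nat.pow_log_le_self 2 (x := v) (by omega)
      rw [hm, pow_add] at this
      simpa using this
    have hhigh : v ≤ 16 * 2 ^ m := by
      have := Nat.lt_pow_succ_log_self (b := 2) (by norm_num) v
      rw [hm, Nat.succ_eq_add_one, pow_add, pow_add] at this
      omega
    -- `40 / 9` is attained at `v = 3` and approached as `v` decreases to `12 * 2 ^ m`.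
    have scaled {a b c l : ℕ} (habc : 9 * (a * b * c) ≤ 40 * l ^ 3) (hl : l * 2 ^ m ≤ v) :
        9 * (a * 2 ^ m * (b * 2 ^ m) * (c * 2 ^ m)) ≤ 40 * v ^ 3 :=
      calc 9 * (a * 2 ^ m * (b * 2 ^ m) * (c * 2 ^ m))
          = 9 * (a * b * c) * (2 ^ m) ^ 3 := by ring
        _ ≤ 40 * l ^ 3 * (2 ^ m) ^ 3 := by gcongr
        _ = 40 * (l * 2 ^ m) ^ 3 := by ring
        _ ≤ 40 * v ^ 3 := by gcongr
    obtain hv10 | hv10 := le_or_gt v (10 * 2 ^ m)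
    · exact key (16 * 2 ^ m) (12 * 2 ^ m) (10 * 2 ^ m) ⟨m + 4, by ring⟩
        (.inr ⟨m + 2, by ring⟩) (.inr (.inr ⟨m, rfl⟩))
        ⟨hhigh, by omega, hv10, scaled (l := 8) (by norm_num) hlow⟩
    obtain hv12 | hv12 := le_or_gt v (12 * 2 ^ m)
    · exact key (16 * 2 ^ m) (12 * 2 ^ m) (20 * 2 ^ m) ⟨m + 4, by ring⟩
        (.inr ⟨m + 2, by ring⟩) (.inr (.inr ⟨m + 1, by ring⟩))
        ⟨hhigh, hv12, by omega, scaled (l := 10) (by norm_num) hv10.le⟩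
    · exact key (16 * 2 ^ m) (24 * 2 ^ m) (20 * 2 ^ m) ⟨m + 4, by ring⟩
        (.inr ⟨m + 3, by ring⟩) (.inr (.inr ⟨m + 1, by ring⟩))
        ⟨hhigh, by omega, by omega, scaled (l := 12) (by norm_num) hv12.le⟩

theorem exists_nine_pow_mul_prod_roundUp_roundingTrio_pow_le {d : ℕ} (x : Fin d → ℕ)
    (hx : ∀ i, 0 < x i) :
    ∃ s, 9 ^ d * (∏ i, roundUp (roundingTrio s) (x i)) ^ 3 ≤ 40 ^ d * (∏ i, x i) ^ 3 := by
  obtain ⟨s, hs⟩ := Finite.exists_min fun s => ∏ i, roundUp (roundingTrio s) (x i)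
  refine ⟨s, ?_⟩
  calc 9 ^ d * (∏ i, roundUp (roundingTrio s) (x i)) ^ 3
      ≤ 9 ^ d * ∏ t, ∏ i, roundUp (roundingTrio t) (x i) := by
        gcongr
        simpa using Finset.univ.pow_card_le_prod _ _ fun t _ => hs t
    _ = ∏ i, 9 * ∏ t, roundUp (roundingTrio t) (x i) := by
        rw [Finset.prod_comm, Finset.prod_mul_distrib, Finset.prod_const, Finset.card_univ,
          Fintype.card_fin]
    _ ≤ ∏ i, 40 * x i ^ 3 :=
        Finset.prod_le_prod' fun i _ => nine_mul_prod_roundUp_roundingTrio_le (hx i)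
    _ = 40 ^ d * (∏ i, x i) ^ 3 := by
        rw [Finset.prod_mul_distrib, Finset.prod_const, Finset.card_univ, Fintype.card_fin,
          Finset.prod_pow]

theorem exists_isRoundingChain_prod_roundUp_le_two_pow {d : ℕ} (x : Fin d → ℕ)
    (hx : ∀ i, 0 < x i) (hmono : Monotone x) :
    ∃ S, IsRoundingChain S ∧ ∏ i, roundUp S (x i) ≤ 2 ^ (d - 1) * ∏ i, x i := by
  cases d with
  | zero => exact ⟨ladder 1, isRoundingChain_ladder one_pos, by simp⟩
  | succ n =>
    refine ⟨ladder (x 0), isRoundingChain_ladder (hx 0), ?_⟩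
    calc ∏ i, roundUp (ladder (x 0)) (x i)
        = x 0 * ∏ i : Fin n, roundUp (ladder (x 0)) (x i.succ) := by
          rw [Fin.prod_univ_succ, roundUp_ladder_self (hx 0)]
      _ ≤ x 0 * ∏ i : Fin n, 2 * x i.succ := by
          gcongr with i
          exact roundUp_ladder_le_two_mul (hx 0) (hmono (Fin.zero_le _))
      _ = 2 ^ (n + 1 - 1) * ∏ i, x i := by
          rw [Fin.prod_univ_succ, Finset.prod_mul_distrib, Finset.prod_const, Finset.card_univ,
            Fintype.card_fin, Nat.add_sub_cancel]
          ring

end DivisibilityChain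

theorem two_pow_le_four_div_exp_one_mul_sqrt_three_pow {d : ℕ} (hd : d ≤ 3) :
    (2 : ℝ) ^ (d - 1) ≤ 4 / exp 1 * √3 ^ (d - 1) := by
  have he : exp 1 < 2.72 := exp_one_lt_d9.trans (by norm_num)
  have hs : (1.7 : ℝ) ≤ √3 := Real.le_sqrt_of_sq_le (by norm_num)
  rw [div_mul_eq_mul_div, le_div_iff₀ (exp_pos 1)]
  interval_cases d <;> norm_num <;> nlinarith

theorem sixteenHundred_div_eightyOne_pow_le {d : ℕ} (hd : 4 ≤ d) :
    (1600 / 81 : ℝ) ^ d ≤ (4 / exp 1 * √3 ^ (d - 1)) ^ 6 := by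
  have h3 : √3 ^ 6 = 27 := by
    rw [show 6 = 2 * 3 by rfl, pow_mul, Real.sq_sqrt (by norm_num)]; norm_num
  induction d, hd using Nat.le_induction with
  | base =>
    have he : exp 1 ^ 6 < 2.72 ^ 6 :=
      pow_lt_pow_left₀ (exp_one_lt_d9.trans (by norm_num)) (exp_pos 1).le (by norm_num)
    rw [mul_pow, ← pow_mul, show 3 * 6 = 6 * 3 by rfl, pow_mul, h3, div_pow (4 : ℝ),
      div_mul_eq_mul_div, le_div_iff₀ (by positivity)]
    nlinarith
  | succ n _ ih =>
    calc (1600 / 81 : ℝ) ^ (n + 1) = (1600 / 81) ^ n * (1600 / 81) := pow_succ _ _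
      _ ≤ (4 / exp 1 * √3 ^ (n - 1)) ^ 6 * 27 := by gcongr; norm_num
      _ = (4 / exp 1 * √3 ^ (n + 1 - 1)) ^ 6 := by
        rw [show n + 1 - 1 = n - 1 + 1 by omega, pow_succ, ← h3]; ring

theorem div_le_of_le_two_pow_mul {d P N : ℕ} (hd : d ≤ 3) (hN : 0 < N)
    (h : P ≤ 2 ^ (d - 1) * N) :
    (P / N : ℝ) ≤ 4 / exp 1 * √3 ^ (d - 1) := by
  rw [div_le_iff₀ (by exact_mod_cast hN)]
  calc (P : ℝ) ≤ 2 ^ (d - 1) * N := by exact_mod_cast h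
    _ ≤ 4 / exp 1 * √3 ^ (d - 1) * N := by
      gcongr; exact two_pow_le_four_div_exp_one_mul_sqrt_three_pow hd

theorem div_le_of_nine_pow_mul_pow_le {d P N : ℕ} (hd : 4 ≤ d) (hN : 0 < N)
    (h : 9 ^ d * P ^ 3 ≤ 40 ^ d * N ^ 3) :
    (P / N : ℝ) ≤ 4 / exp 1 * √3 ^ (d - 1) := by
  have hcube : (P / N : ℝ) ^ 3 ≤ (40 / 9) ^ d := by
    rw [div_pow, div_le_iff₀ (by positivity), div_pow, div_mul_eq_mul_div,
      le_div_iff₀ (by positivity), mul_comm]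
    exact_mod_cast h
  refine (pow_le_pow_iff_left₀ (by positivity) (by positivity) (by norm_num : 6 ≠ 0)).1 ?_
  calc (P / N : ℝ) ^ 6 = ((P / N : ℝ) ^ 3) ^ 2 := by ring
    _ ≤ ((40 / 9 : ℝ) ^ d) ^ 2 := by gcongr
    _ = (1600 / 81) ^ d := by rw [← pow_mul, mul_comm, pow_mul]; norm_num
    _ ≤ _ := sixteenHundred_div_eightyOne_pow_le hd

open DivisibilityChain

theorem stmt7 (d : ℕ) (x : Fin d → ℕ) (hxpos : ∀ i, 0 < x i)
    (hxmono : ∀ i j : Fin d, i ≤ j → x i ≤ x j) :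
    ∃ y : Fin d → ℕ, (∀ i, 0 < y i) ∧ (∀ i, x i ≤ y i) ∧
      (∀ i : Fin d, ∀ h : i.val + 1 < d, y i ∣ y ⟨i.val + 1, h⟩) ∧
      ((∏ i, y i : ℝ) / (∏ i, x i : ℝ) ≤ (4 / Real.exp 1) * (Real.sqrt 3) ^ (d - 1)) := by
  have hN : 0 < ∏ i, x i := Finset.prod_pos fun i _ => hxpos i
  obtain ⟨S, hS, hratio⟩ : ∃ S, IsRoundingChain S ∧
      ((∏ i, roundUp S (x i) : ℕ) / (∏ i, x i : ℕ) : ℝ) ≤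
        4 / exp 1 * √3 ^ (d - 1) := by
    obtain hd | hd := le_or_gt d 3
    · obtain ⟨S, hS, hP⟩ := exists_isRoundingChain_prod_roundUp_le_two_pow x hxpos hxmono
      exact ⟨S, hS, div_le_of_le_two_pow_mul hd hN hP⟩
    · obtain ⟨s, hs⟩ := exists_nine_pow_mul_prod_roundUp_roundingTrio_pow_le x hxpos
      exact ⟨_, isRoundingChain_roundingTrio s, div_le_of_nine_pow_mul_pow_le hd hN hs⟩
  refine ⟨fun i => roundUp S (x i), fun i => hS.roundUp_pos _, fun i => hS.le_roundUp _,
    fun i h => hS.roundUp_dvd_roundUp (hxmono _ _ (Fin.le_def.2 (Nat.le_succ _))), ?_⟩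
  push_cast at hratio
  exact hratio
end

section
/- Let K_1,…,K_n ⊂ ℝ be compact intervals (1-dimensional convex bodies), and let q_1 ≥ q_2 be positive integers such that: (1) each K_j has length strictly less than q_1 (equivalently (K_j − K_j) ∩ q_1(ℤ \ {0}) = ∅), and (2) (K_j − K_l) ∩ q_2ℤ = ∅ for all j ≠ l. Then the total number of integer points in the union, ∑_{j=1}^n #(K_j ∩ ℤ), is at most q_1. -/
open Pointwise Set

/-!
The integer points of each `K_j` form a run of consecutive integers. If some run has at least
`q₂` points, it meets every residue class mod `q₂`, so by (2) no other `K_l` contains an integer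
point and the total is `#(K_j ∩ ℤ) ≤ q₁` by (1). Otherwise every run maps injectively to
`ℤ/q₂ℤ`, and by (2) these images are pairwise disjoint, so the total is at most `q₂ ≤ q₁`.
-/

theorem Finset.sum_card_le_card_of_injOn_sigma {ι α β : Type*} [Fintype β] (s : Finset ι)
    (S : ι → Finset α) (f : α → β)
    (hf : ∀ i ∈ s, ∀ j ∈ s, ∀ x ∈ S i, ∀ y ∈ S j, f x = f y → i = j ∧ x = y) :
    ∑ i ∈ s, (S i).card ≤ Fintype.card β := by
  rw [← Finset.card_sigma, ← Finset.card_univ]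
  refine Finset.card_le_card_of_injOn (fun p => f p.2) (fun _ _ => Finset.mem_univ _) ?_
  rintro ⟨i, x⟩ hx ⟨j, y⟩ hy hxy
  simp only [Finset.coe_sigma, Set.mem_sigma_iff, Finset.mem_coe] at hx hy
  obtain ⟨rfl, rfl⟩ := hf i hx.1 j hy.1 x hx.2 y hy.2 hxy
  rfl

theorem ZMod.injOn_intCast_Icc {q : ℕ} {c d : ℤ} (h : (Finset.Icc c d).card ≤ q) :
    InjOn ((↑) : ℤ → ZMod q) (Finset.Icc c d) := by
  intro m hm k hk hmk
  rw [Finset.coe_Icc, mem_Icc] at hm hk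
  rw [Int.card_Icc] at h
  have := Int.eq_zero_of_abs_lt_dvd ((ZMod.intCast_eq_intCast_iff_dvd_sub _ _ _).1 hmk)
    (by rw [abs_lt]; omega)
  omega

theorem ZMod.exists_mem_Icc_intCast_eq {q : ℕ} [NeZero q] {c d : ℤ}
    (h : q ≤ (Finset.Icc c d).card) (r : ZMod q) : ∃ m ∈ Finset.Icc c d, (m : ZMod q) = r := by
  refine ⟨c + (r - c).val, ?_, by push_cast [ZMod.natCast_zmod_val]; ring⟩
  have := (r - c).val_lt
  rw [Int.card_Icc] at h
  rw [Finset.mem_Icc]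
  omega

theorem sum_card_Icc_le_of_intCast_zmod_ne {ι : Type*} [Fintype ι] {q N : ℕ} [NeZero q]
    (hqN : q ≤ N) (c d : ι → ℤ) (hN : ∀ j, (Finset.Icc (c j) (d j)).card ≤ N)
    (hsep : ∀ j l, j ≠ l → ∀ m ∈ Finset.Icc (c j) (d j), ∀ k ∈ Finset.Icc (c l) (d l),
      (m : ZMod q) ≠ k) :
    ∑ j, (Finset.Icc (c j) (d j)).card ≤ N := by
  by_cases hlong : ∃ j₀, q ≤ (Finset.Icc (c j₀) (d j₀)).card
  · obtain ⟨j₀, hj₀⟩ := hlong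
    have hempty : ∀ l ≠ j₀, Finset.Icc (c l) (d l) = ∅ := by
      refine fun l hl => Finset.eq_empty_of_forall_notMem fun k hk => ?_
      obtain ⟨m, hm, hmk⟩ := ZMod.exists_mem_Icc_intCast_eq hj₀ (k : ZMod q)
      exact hsep j₀ l hl.symm m hm k hk hmk
    rw [Finset.sum_eq_single j₀ (fun l _ hl => by rw [hempty l hl, Finset.card_empty])
      (by simp)]
    exact hN j₀
  · push Not at hlong
    calc ∑ j, (Finset.Icc (c j) (d j)).card ≤ Fintype.card (ZMod q) := by
          refine Finset.sum_card_le_card_of_injOn_sigma _ _ ((↑) : ℤ → ZMod q)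
            fun j _ l _ m hm k hk hmk => ?_
          obtain rfl | hjl := eq_or_ne j l
          · exact ⟨rfl, ZMod.injOn_intCast_Icc (hlong j).le hm hk hmk⟩
          · exact absurd hmk (hsep j l hjl m hm k hk)
      _ = q := ZMod.card q
      _ ≤ N := hqN

theorem ncard_Icc_inter_range_intCast {R : Type*} [Ring R] [LinearOrder R]
    [IsStrictOrderedRing R] [FloorRing R] (a b : R) :
    (Icc a b ∩ range ((↑) : ℤ → R)).ncard = (Finset.Icc ⌈a⌉ ⌊b⌋).card := by
  rw [← image_preimage_eq_inter_range, Int.preimage_Icc,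
    ncard_image_of_injective _ Int.cast_injective, ← Finset.coe_Icc, ncard_coe_finset]

theorem card_Icc_ceil_floor_le {R : Type*} [Ring R] [LinearOrder R] [IsStrictOrderedRing R]
    [FloorRing R] {a b : R} {N : ℕ} (h : b - a < N) : (Finset.Icc ⌈a⌉ ⌊b⌋).card ≤ N := by
  have : ((⌊b⌋ - ⌈a⌉ : ℤ) : R) < N := by
    push_cast
    exact (sub_le_sub (Int.floor_le b) (Int.le_ceil a)).trans_lt h
  have : ⌊b⌋ - ⌈a⌉ < N := by exact_mod_cast this
  rw [Int.card_Icc]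
  omega

theorem intCast_zmod_ne_of_sub_inter_eq_empty {K L : Set ℝ} {q : ℕ}
    (h : (K - L) ∩ {x : ℝ | ∃ m : ℤ, x = (q : ℝ) * m} = ∅) {m k : ℤ} (hm : (m : ℝ) ∈ K)
    (hk : (k : ℝ) ∈ L) : (m : ZMod q) ≠ k := by
  intro hmk
  obtain ⟨t, ht⟩ := (ZMod.intCast_eq_intCast_iff_dvd_sub _ _ _).1 hmk.symm
  exact h.subset ⟨sub_mem_sub hm hk, t, by exact_mod_cast ht⟩

theorem stmt8_general (n : ℕ) (a b : Fin n → ℝ)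
    (q1 q2 : ℕ) (hq2 : 0 < q2) (hq : q2 ≤ q1)
    (h1 : ∀ j, b j - a j < (q1 : ℝ))
    (h2 : ∀ j l, j ≠ l →
      (Icc (a j) (b j) - Icc (a l) (b l)) ∩ {x : ℝ | ∃ m : ℤ, x = (q2 : ℝ) * m} = ∅) :
    ∑ j : Fin n, (Icc (a j) (b j) ∩ (Set.range ((↑) : ℤ → ℝ))).ncard ≤ q1 := by
  have : NeZero q2 := ⟨hq2.ne'⟩
  have hcast : ∀ j, ∀ m ∈ Finset.Icc ⌈a j⌉ ⌊b j⌋, (m : ℝ) ∈ Icc (a j) (b j) := fun j m hm => by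
    rwa [← Finset.mem_coe, Finset.coe_Icc, ← Int.preimage_Icc] at hm
  simp only [ncard_Icc_inter_range_intCast]
  exact sum_card_Icc_le_of_intCast_zmod_ne hq _ _ (fun j => card_Icc_ceil_floor_le (h1 j))
    fun j l hjl m hm k hk =>
      intCast_zmod_ne_of_sub_inter_eq_empty (h2 j l hjl) (hcast j m hm) (hcast l k hk)

theorem stmt8 (n : ℕ) (a b : Fin n → ℝ) (hab : ∀ j, a j ≤ b j)
    (q1 q2 : ℕ) (hq1 : 0 < q1) (hq2 : 0 < q2) (hq : q2 ≤ q1)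
    (h1 : ∀ j, b j - a j < (q1 : ℝ))
    (h2 : ∀ j l, j ≠ l →
      (Icc (a j) (b j) - Icc (a l) (b l)) ∩ {x : ℝ | ∃ m : ℤ, x = (q2 : ℝ) * m} = ∅) :
    ∑ j : Fin n, (Icc (a j) (b j) ∩ (Set.range ((↑) : ℤ → ℝ))).ncard ≤ q1 :=
  stmt8_general n a b q1 q2 hq2 hq h1 h2
end

section
/- Let K ⊂ ℝ^2 be a convex body and v^1, v^2 ∈ ℝ^2 linearly independent vectors such that K ∩ (K + v^1) ≠ ∅ and K ∩ (K + v^2) ≠ ∅. Let Λ be the lattice generated by v^1, v^2. Then there exists a point x ∈ K such that the boundary of the parallelogram with vertices x, x+v^1, x+v^2, x+v^1+v^2 is contained in K + Λ. -/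
/-!
If `k` and `k + u` lie in the convex set `K` and `u ∈ Λ`, then the segment `[k, k + u]` meets
every class of the line `k + ℝu` modulo `ℤu`, so the whole line lies in `K + Λ`. The hypotheses
give such lines in the directions `v` and `w`; since `v, w` span the plane, the two lines meet at
a point `x₀`. Writing `x₀ = x + λ` with `x ∈ K` and `λ ∈ Λ`, every edge of the parallelogram at
`x` lies on a `Λ`-translate of one of the two lines through `x₀`.
-/

open Pointwise Set

section

variable {E : Type*} [AddCommGroup E] {K : Set E} {Λ : Submodule ℤ E}

lemma add_mem_add_submodule {x μ : E} (hx : x ∈ K + (Λ : Set E)) (hμ : μ ∈ Λ) :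
    x + μ ∈ K + (Λ : Set E) := by
  obtain ⟨k, hk, ν, hν, rfl⟩ := hx
  exact ⟨k, hk, ν + μ, Λ.add_mem hν hμ, (add_assoc k ν μ).symm⟩

variable [Module ℝ E]

lemma Convex.add_smul_mem_add_submodule (hK : Convex ℝ K) {k u : E} (hk : k ∈ K)
    (hku : k + u ∈ K) (hu : u ∈ Λ) (t : ℝ) : k + t • u ∈ K + (Λ : Set E) := by
  have hfract : k + Int.fract t • u ∈ K :=
    hK.add_smul_mem hk hku ⟨Int.fract_nonneg t, (Int.fract_lt_one t).le⟩
  refine ⟨_, hfract, ⌊t⌋ • u, Λ.smul_mem _ hu, ?_⟩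
  change k + Int.fract t • u + ⌊t⌋ • u = k + t • u
  rw [add_assoc, ← Int.cast_smul_eq_zsmul ℝ, ← add_smul, Int.fract_add_floor]

lemma segment_subset_add_submodule {x u y : E} (hline : ∀ t : ℝ, x + t • u ∈ K + (Λ : Set E))
    (hy : y - x ∈ Λ) : segment ℝ y (y + u) ⊆ K + (Λ : Set E) := by
  rw [segment_eq_image']
  rintro _ ⟨r, -, rfl⟩
  convert add_mem_add_submodule (hline r) hy using 1
  simp only [add_sub_cancel_left]
  abel

lemma exists_add_smul_eq_add_smul_of_finrank_eq_two (hE : Module.finrank ℝ E = 2) {v w : E}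
    (hind : LinearIndependent ℝ ![v, w]) (a b : E) :
    ∃ t s : ℝ, a + t • v = b + s • w := by
  have hspan : Submodule.span ℝ {v, w} = ⊤ := by
    rw [← Matrix.range_cons_cons_empty v w ![]]
    exact hind.span_eq_top_of_card_eq_finrank (by simp [hE])
  obtain ⟨t, s, hts⟩ := Submodule.mem_span_pair.mp (hspan ▸ Submodule.mem_top : b - a ∈ _)
  exact ⟨t, -s, by linear_combination (norm := module) hts⟩

end

theorem stmt11_general (K : Set (Fin 2 → ℝ))
    (hKconv : Convex ℝ K)
    (v w : Fin 2 → ℝ) (hind : LinearIndependent ℝ ![v, w])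
    (hv : (K ∩ (K + {v})).Nonempty) (hw : (K ∩ (K + {w})).Nonempty) :
    ∃ x ∈ K,
      segment ℝ x (x + v) ∪ segment ℝ x (x + w) ∪
      segment ℝ (x + v) (x + v + w) ∪ segment ℝ (x + w) (x + v + w) ⊆
        K + (Submodule.span ℤ {v, w} : Set (Fin 2 → ℝ)) := by
  set Λ : Submodule ℤ (Fin 2 → ℝ) := Submodule.span ℤ {v, w}
  have hvΛ : v ∈ Λ := Submodule.subset_span (by simp)
  have hwΛ : w ∈ Λ := Submodule.subset_span (by simp)
  obtain ⟨_, ha, a, hav, v', hv', rfl⟩ := hv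
  obtain ⟨_, hb, b, hbw, w', hw', rfl⟩ := hw
  subst v' w'
  obtain ⟨t, s, hts⟩ := exists_add_smul_eq_add_smul_of_finrank_eq_two (by simp) hind a b
  have hline_v : ∀ r : ℝ, a + t • v + r • v ∈ K + (Λ : Set _) := fun r => by
    simpa [add_assoc, add_smul] using hKconv.add_smul_mem_add_submodule hav ha hvΛ (t + r)
  have hline_w : ∀ r : ℝ, a + t • v + r • w ∈ K + (Λ : Set _) := fun r => by
    simpa [hts, add_assoc, add_smul] using hKconv.add_smul_mem_add_submodule hbw hb hwΛ (s + r)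
  obtain ⟨x, hx, μ, hμ, hxμ⟩ := by simpa using hline_v 0
  refine ⟨x, hx, union_subset (union_subset (union_subset ?_ ?_) ?_) ?_⟩
  · exact segment_subset_add_submodule hline_v (by simpa [← hxμ] using Λ.neg_mem hμ)
  · exact segment_subset_add_submodule hline_w (by simpa [← hxμ] using Λ.neg_mem hμ)
  · exact segment_subset_add_submodule hline_w (by simpa [← hxμ] using Λ.sub_mem hvΛ hμ)
  · rw [add_right_comm]
    exact segment_subset_add_submodule hline_v (by simpa [← hxμ] using Λ.sub_mem hwΛ hμ)

theorem stmt11 (K : Set (Fin 2 → ℝ))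
    (hKconv : Convex ℝ K) (hKcomp : IsCompact K) (hKint : (interior K).Nonempty)
    (v w : Fin 2 → ℝ) (hind : LinearIndependent ℝ ![v, w])
    (hv : (K ∩ (K + {v})).Nonempty) (hw : (K ∩ (K + {w})).Nonempty) :
    ∃ x ∈ K,
      segment ℝ x (x + v) ∪ segment ℝ x (x + w) ∪
      segment ℝ (x + v) (x + v + w) ∪ segment ℝ (x + w) (x + v + w) ⊆
        K + (Submodule.span ℤ {v, w} : Set (Fin 2 → ℝ)) :=
  stmt11_general K hKconv v w hind hv hw
end

section
/- Let K ⊂ ℝ^2 be a convex body such that both K ∩ (K + v) ≠ ∅ and K ∩ (K + w) ≠ ∅ for two linearly independent vectors v, w generating a lattice Λ. Then K + ℤv contains an entire straight line parallel to v. -/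
open Pointwise Set

/-- Writing `s = ⌊s⌋ + fract s`, the point `k + fract s • v` lies on the segment `[k, k + v]`. -/
theorem Convex.exists_mem_add_intCast_smul_eq {E : Type*} [AddCommGroup E] [Module ℝ E]
    {K : Set E} (hK : Convex ℝ K) {k v : E} (hk : k ∈ K) (hkv : k + v ∈ K) (s : ℝ) :
    ∃ x ∈ K, ∃ m : ℤ, k + s • v = x + (m : ℝ) • v := by
  refine ⟨k + Int.fract s • v, ?_, ⌊s⌋, ?_⟩
  · exact hK.add_smul_mem hk hkv ⟨Int.fract_nonneg s, (Int.fract_lt_one s).le⟩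
  · conv_lhs => rw [← Int.floor_add_fract s]
    module

theorem stmt12_general (K : Set (Fin 2 → ℝ))
    (hKconv : Convex ℝ K) (v : Fin 2 → ℝ)
    (hv : (K ∩ (K + {v})).Nonempty) :
    ∃ p : Fin 2 → ℝ, ∀ s : ℝ, ∃ k ∈ K, ∃ m : ℤ, p + s • v = k + (m : ℝ) • v := by
  obtain ⟨_, hk₀v, k₀, hk₀, _, rfl, rfl⟩ := hv
  exact ⟨k₀, hKconv.exists_mem_add_intCast_smul_eq hk₀ hk₀v⟩

theorem stmt12 (K : Set (Fin 2 → ℝ))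
    (hKconv : Convex ℝ K) (hKcomp : IsCompact K) (hKint : (interior K).Nonempty)
    (v w : Fin 2 → ℝ) (hind : LinearIndependent ℝ ![v, w])
    (hv : (K ∩ (K + {v})).Nonempty) (hw : (K ∩ (K + {w})).Nonempty) :
    ∃ p : Fin 2 → ℝ, ∀ s : ℝ, ∃ k ∈ K, ∃ m : ℤ, p + s • v = k + (m : ℝ) • v :=
  stmt12_general K hKconv v hv
end

section
/- Let K_1 and K_2 be convex bodies in ℝ^d, Λ a lattice, and r a positive integer such that (K_1 − K_2) ∩ rΛ = ∅. Then for every integer t ≥ r there exist lattice vectors u_1, u_2 ∈ Λ such that ((K_1 + u_1) − (K_2 + u_2)) ∩ tΛ = ∅. -/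
/-!
Suppose no pair of translates works and put `s = t - r`. Translating `K₁` by `s • v` shows that
every `v ∈ Λ` has a successor `z ∈ Λ` with `t • z - s • v ∈ K₁ - K₂`. The iterated successors
of `0` stay in a ball of radius `M / r`, so they eventually repeat: `u (n + j) = u n`.
Telescoping the steps `t • u (k + 1) - s • u k` along the cycle writes `(t ^ j - s ^ j) • u n`
as `(t ^ j - s ^ j) / (t - s)` times a convex combination of points of `K₁ - K₂`, whence
`r • u n ∈ K₁ - K₂`.
-/

open Pointwise Set

open Finset in
theorem Convex.pow_smul_sub_pow_smul_mem {E : Type*} [AddCommGroup E] [Module ℝ E] {C : Set E}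
    (hC : Convex ℝ C) {s t : ℝ} (hs : 0 ≤ s) (ht : 0 ≤ t) {u : ℕ → E}
    (hu : ∀ k, t • u (k + 1) - s • u k ∈ C) (n j : ℕ) :
    t ^ j • u (n + j) - s ^ j • u n ∈ (∑ i ∈ range j, t ^ i * s ^ (j - 1 - i)) • C := by
  induction j with
  | zero => simp [Set.zero_smul_set ⟨_, hu 0⟩]
  | succ j ih =>
    rw [Nat.add_sub_cancel, geom_sum₂_succ_eq, hC.add_smul (by positivity)
      (mul_nonneg hs (sum_nonneg fun i _ => by positivity)), mul_smul]
    convert Set.add_mem_add (Set.smul_mem_smul_set (a := t ^ j) (hu (n + j)))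
      (Set.smul_mem_smul_set (a := s) ih) using 1
    simp only [smul_sub, smul_smul, pow_succ, ← add_assoc]
    module

theorem Convex.sub_smul_mem_of_eq {E : Type*} [AddCommGroup E] [Module ℝ E] {C : Set E}
    (hC : Convex ℝ C) {s t : ℝ} (hs : 0 ≤ s) (hst : s < t) {u : ℕ → E}
    (hu : ∀ k, t • u (k + 1) - s • u k ∈ C) {n j : ℕ} (hj : j ≠ 0) (hper : u (n + j) = u n) :
    (t - s) • u n ∈ C := by
  have hmem := hC.pow_smul_sub_pow_smul_mem hs (hs.trans hst.le) hu n j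
  rw [hper, ← sub_smul, ← geom_sum₂_mul, mul_smul] at hmem
  refine (Set.smul_mem_smul_set_iff₀ ?_ _ _).1 hmem
  intro h0
  have := geom_sum₂_mul t s j
  rw [h0, zero_mul, eq_comm, sub_eq_zero] at this
  exact (pow_lt_pow_left₀ hst hs hj).ne' this

theorem norm_le_of_smul_sub_smul_mem {E : Type*} [SeminormedAddCommGroup E] [NormedSpace ℝ E]
    {C : Set E} {M : ℝ} (hM : ∀ x ∈ C, ‖x‖ ≤ M) {s t : ℝ} (hs : 0 ≤ s) (hst : s < t)
    {u : ℕ → E} (hu0 : u 0 = 0) (hu : ∀ k, t • u (k + 1) - s • u k ∈ C) (k : ℕ) :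
    ‖u k‖ ≤ M / (t - s) := by
  have hts : 0 < t - s := sub_pos.2 hst
  induction k with
  | zero =>
    rw [hu0, norm_zero]
    exact div_nonneg ((norm_nonneg _).trans (hM _ (hu 0))) hts.le
  | succ k ih =>
    refine le_of_mul_le_mul_left ?_ (hs.trans_lt hst)
    calc t * ‖u (k + 1)‖ = ‖(t • u (k + 1) - s • u k) + s • u k‖ := by
          rw [sub_add_cancel, norm_smul, Real.norm_of_nonneg (hs.trans hst.le)]
      _ ≤ M + s * (M / (t - s)) := by
          refine (norm_add_le _ _).trans (add_le_add (hM _ (hu k)) ?_)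
          rw [norm_smul, Real.norm_of_nonneg hs]
          exact mul_le_mul_of_nonneg_left ih hs
      _ = t * (M / (t - s)) := by field_simp; ring

theorem Submodule.exists_sub_smul_mem_of_forall_exists_smul_sub_smul_mem {E : Type*}
    [NormedAddCommGroup E] [NormedSpace ℝ E] [ProperSpace E]
    (Λ : Submodule ℤ E) [DiscreteTopology Λ] {C : Set E} (hC : Convex ℝ C)
    (hCb : Bornology.IsBounded C) {s t : ℝ} (hs : 0 ≤ s) (hst : s < t)
    (hcov : ∀ v ∈ Λ, ∃ z ∈ Λ, t • z - s • v ∈ C) :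
    ∃ w ∈ Λ, (t - s) • w ∈ C := by
  choose! g hgΛ hgC using hcov
  set u : ℕ → E := fun k => g^[k] 0 with hu_def
  have huΛ : ∀ k, u k ∈ Λ := by
    intro k
    induction k with
    | zero => exact Λ.zero_mem
    | succ k ih => simpa only [hu_def, Function.iterate_succ_apply'] using hgΛ _ ih
  have hstep : ∀ k, t • u (k + 1) - s • u k ∈ C := by
    intro k
    simpa only [hu_def, Function.iterate_succ_apply'] using hgC _ (huΛ k)
  obtain ⟨M, hM⟩ := hCb.exists_norm_le
  have hΛ : IsClosed (Λ : Set E) := by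
    rw [← Λ.coe_toAddSubgroup]
    exact AddSubgroup.isClosed_of_discrete
  have hfin : (Metric.closedBall 0 (M / (t - s)) ∩ (Λ : Set E)).Finite :=
    Metric.finite_isBounded_inter_isClosed DiscreteTopology.isDiscrete
      Metric.isBounded_closedBall hΛ
  have hbound (k : ℕ) : u k ∈ Metric.closedBall 0 (M / (t - s)) ∩ (Λ : Set E) :=
    ⟨mem_closedBall_zero_iff.2 (norm_le_of_smul_sub_smul_mem hM hs hst rfl hstep k), huΛ k⟩
  obtain ⟨n, m, hnm, hper⟩ := hfin.exists_lt_map_eq_of_forall_mem hbound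
  refine ⟨u n, huΛ n, hC.sub_smul_mem_of_eq hs hst hstep (j := m - n) (by omega) ?_⟩
  rw [Nat.add_sub_cancel' hnm.le, hper]

theorem stmt19_general {d : ℕ} (K₁ K₂ : Set (Fin d → ℝ)) (Λ : Submodule ℤ (Fin d → ℝ))
    [DiscreteTopology Λ]
    (h₁conv : Convex ℝ K₁) (h₁comp : IsCompact K₁)
    (h₂conv : Convex ℝ K₂) (h₂comp : IsCompact K₂)
    (r : ℕ) (hr : 0 < r)
    (hdisj : (K₁ - K₂) ∩ ((r : ℝ) • (Λ : Set (Fin d → ℝ))) = ∅)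
    (t : ℕ) (ht : r ≤ t) :
    ∃ u₁ ∈ Λ, ∃ u₂ ∈ Λ,
      ((u₁ +ᵥ K₁) - (u₂ +ᵥ K₂)) ∩ ((t : ℝ) • (Λ : Set (Fin d → ℝ))) = ∅ := by
  by_contra! hcon
  have hcov : ∀ v ∈ Λ, ∃ z ∈ Λ, (t : ℝ) • z - ((t - r : ℕ) : ℝ) • v ∈ K₁ - K₂ := by
    intro v hv
    obtain ⟨_, ⟨_, ⟨a, ha, rfl⟩, _, ⟨b, hb, rfl⟩, rfl⟩, z, hz, hzx⟩ :=
      hcon ((t - r) • v) (Λ.nsmul_mem hv _) 0 Λ.zero_mem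
    refine ⟨z, hz, ?_⟩
    convert Set.sub_mem_sub ha hb using 1
    simp only [hzx, Nat.cast_smul_eq_nsmul, vadd_eq_add, zero_add]
    abel
  obtain ⟨w, hwΛ, hw⟩ := Λ.exists_sub_smul_mem_of_forall_exists_smul_sub_smul_mem
    (h₁conv.sub h₂conv) (h₁comp.isBounded.sub h₂comp.isBounded) (Nat.cast_nonneg _)
    (by rw [Nat.cast_sub ht]; linarith [(Nat.cast_pos (α := ℝ)).2 hr]) hcov
  rw [Nat.cast_sub ht, sub_sub_cancel] at hw
  exact hdisj.subset ⟨hw, Set.smul_mem_smul_set hwΛ⟩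

theorem stmt19 {d : ℕ} (K₁ K₂ : Set (Fin d → ℝ)) (Λ : Submodule ℤ (Fin d → ℝ))
    [DiscreteTopology Λ] [IsZLattice ℝ Λ]
    (h₁conv : Convex ℝ K₁) (h₁comp : IsCompact K₁) (h₁int : (interior K₁).Nonempty)
    (h₂conv : Convex ℝ K₂) (h₂comp : IsCompact K₂) (h₂int : (interior K₂).Nonempty)
    (r : ℕ) (hr : 0 < r)
    (hdisj : (K₁ - K₂) ∩ ((r : ℝ) • (Λ : Set (Fin d → ℝ))) = ∅)
    (t : ℕ) (ht : r ≤ t) :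
    ∃ u₁ ∈ Λ, ∃ u₂ ∈ Λ,
      ((u₁ +ᵥ K₁) - (u₂ +ᵥ K₂)) ∩ ((t : ℝ) • (Λ : Set (Fin d → ℝ))) = ∅ :=
  stmt19_general K₁ K₂ Λ h₁conv h₁comp h₂conv h₂comp r hr hdisj t ht
end
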